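/- arXiv:2510.04995 — 5 statements merged into one kernel-verified Lean document; each statement's English description precedes it below -/
import Mathlib

section
/- For every fixed x > 0 with x ≠ 1, the function λ ↦ ψ(λ,x) is strictly increasing on ℝ. -/
noncomputable def boxCox (l x : ℝ) : ℝ :=
  if l = 0 then Real.log x else (x ^ l - 1) / l

lemma key_ineq (u : ℝ) (hu : u ≠ 0) : 0 < (u - 1) * Real.exp u + 1 := by
  rcases lt_or_ge u 1 with h | h
  · have h1 : 1 - u < Real.exp (-u) := by
      have := Real.add_one_lt_exp (neg_ne_zero.mpr hu)
      linarith
    have h2 : (1 - u) * Real.exp u < Real.exp (-u) * Real.exp u :=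
      mul_lt_mul_of_pos_right h1 (Real.exp_pos u)
    rw [← Real.exp_add] at h2
    simp at h2
    nlinarith
  · nlinarith [Real.exp_pos u]

theorem boxCox_strictMono_in_lambda (x : ℝ) (hx : 0 < x) (hx1 : x ≠ 1) :
    StrictMono (fun l => boxCox l x) := by
  set c := Real.log x with hcdef
  have hc : c ≠ 0 := Real.log_ne_zero_of_pos_of_ne_one hx hx1
  set f := fun l => boxCox l x with hf
  -- f agrees with (exp (c*l) - 1)/l off 0
  have hfeq : ∀ l : ℝ, l ≠ 0 → f l = (Real.exp (c * l) - 1) / l := by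
    intro l hl
    simp only [hf, boxCox, if_neg hl, Real.rpow_def_of_pos hx, hcdef]
  have hf0 : f 0 = c := by simp [hf, boxCox, hcdef]
  -- derivative off zero
  have hderiv : ∀ l : ℝ, l ≠ 0 →
      HasDerivAt f (((c * Real.exp (c * l)) * l - (Real.exp (c * l) - 1) * 1) / l ^ 2) l := by
    intro l hl
    have hnum : HasDerivAt (fun t : ℝ => Real.exp (c * t) - 1) (c * Real.exp (c * l)) l := by
      have h1 : HasDerivAt (fun t : ℝ => c * t) c l := (hasDerivAt_id l).const_mul c |>.congr_deriv (by ring)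
      have h2 := (Real.hasDerivAt_exp (c * l)).comp l h1
      simpa [mul_comm] using h2.sub_const 1
    have hden : HasDerivAt (fun t : ℝ => t) 1 l := hasDerivAt_id l
    have h := hnum.div hden hl
    refine h.congr_of_eventuallyEq ?_
    filter_upwards [isOpen_ne.mem_nhds (x := l) hl] with t ht
    exact hfeq t ht
  have hderivpos : ∀ l : ℝ, l ≠ 0 → 0 < deriv f l := by
    intro l hl
    rw [(hderiv l hl).deriv]
    have hnum : 0 < (c * Real.exp (c * l)) * l - (Real.exp (c * l) - 1) * 1 := by
      have := key_ineq (c * l) (mul_ne_zero hc hl)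
      nlinarith
    positivity
  -- continuity at 0
  have hcont0 : ContinuousAt f 0 := by
    have hexp : HasDerivAt (fun t : ℝ => Real.exp (c * t)) c 0 := by
      have h1 : HasDerivAt (fun t : ℝ => c * t) c 0 := (hasDerivAt_id 0).const_mul c |>.congr_deriv (by ring)
      have h2 := (Real.hasDerivAt_exp (c * 0)).comp 0 h1
      simpa [Function.comp_def] using h2
    have hslope := hasDerivAt_iff_tendsto_slope.mp hexp
    have htend : Filter.Tendsto f (nhdsWithin 0 {0}ᶜ) (nhds c) := by
      refine hslope.congr' ?_
      filter_upwards [self_mem_nhdsWithin] with t ht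
      have ht' : t ≠ 0 := ht
      rw [hfeq t ht']
      simp [slope, ht']
      ring
    rw [ContinuousAt, hf0]
    rw [← nhdsNE_sup_pure 0]
    exact htend.sup (hf0 ▸ tendsto_pure_nhds f 0)
  have hcont : Continuous f := by
    rw [continuous_iff_continuousAt]
    intro l
    by_cases hl : l = 0
    · subst hl; exact hcont0
    · exact (hderiv l hl).continuousAt
  -- strict mono on each half line
  have hIci : StrictMonoOn f (Set.Ici 0) := by
    refine strictMonoOn_of_deriv_pos (convex_Ici 0) hcont.continuousOn ?_
    intro l hl
    rw [interior_Ici] at hl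
    exact hderivpos l (ne_of_gt hl)
  have hIic : StrictMonoOn f (Set.Iic 0) := by
    refine strictMonoOn_of_deriv_pos (convex_Iic 0) hcont.continuousOn ?_
    intro l hl
    rw [interior_Iic] at hl
    exact hderivpos l (ne_of_lt hl)
  intro a b hab
  rcases le_or_gt 0 a with ha | ha
  · exact hIci ha (le_trans ha hab.le) hab
  · rcases le_or_gt b 0 with hb | hb
    · exact hIic ha.le hb hab
    · exact lt_trans (hIic ha.le Set.self_mem_Iic ha) (hIci Set.self_mem_Ici hb.le hb)
end

section
/- For every fixed x > 1, the function λ ↦ ψ(λ,x) is convex on ℝ; for every fixed 0 < x < 1, it is concave on ℝ. -/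
open Real intervalIntegral

lemma exp_integral_eval (c : ℝ) :
    ∫ t in (0:ℝ)..1, Real.exp (c * t) = if c = 0 then 1 else (Real.exp c - 1) / c := by
  rcases eq_or_ne c 0 with hc | hc
  · simp [hc]
  · simp only [hc, if_false]
    have h := intervalIntegral.integral_comp_mul_right (a := (0:ℝ)) (b := 1)
      (fun t => Real.exp t) hc
    simp only [mul_comm c] at h ⊢
    rw [h]
    simp [integral_exp, smul_eq_mul, div_eq_inv_mul]

lemma boxCox_eq_integral (l x : ℝ) (hx : 0 < x) :
    boxCox l x = Real.log x * ∫ t in (0:ℝ)..1, Real.exp (Real.log x * l * t) := by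
  set a := Real.log x with ha
  rw [exp_integral_eval (a * l)]
  rcases eq_or_ne l 0 with hl | hl
  · simp [boxCox, hl, ha]
  · rcases eq_or_ne a 0 with ha0 | ha0
    · have hx1 : x = 1 := by
        have := Real.exp_log hx
        rw [← ha, ha0] at this
        simpa using this.symm
      simp [boxCox, hl, hx1, ha0]
    · have hc : a * l ≠ 0 := mul_ne_zero ha0 hl
      simp only [boxCox, hl, if_false, hc, if_false]
      rw [Real.rpow_def_of_pos hx, ← ha]
      field_simp

lemma key_convex (a : ℝ) :
    ConvexOn ℝ Set.univ (fun l : ℝ => ∫ t in (0:ℝ)..1, Real.exp (a * l * t)) := by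
  refine ⟨convex_univ, fun p _ q _ u v hu hv huv => ?_⟩
  have hint : ∀ r : ℝ, IntervalIntegrable (fun t => Real.exp (a * r * t))
      MeasureTheory.volume 0 1 := fun r =>
    (Real.continuous_exp.comp (continuous_const.mul continuous_id)).intervalIntegrable 0 1
  have hint2 : IntervalIntegrable
      (fun t => u * Real.exp (a * p * t) + v * Real.exp (a * q * t))
      MeasureTheory.volume 0 1 :=
    ((hint p).const_mul u).add ((hint q).const_mul v)
  simp only [smul_eq_mul]
  rw [← intervalIntegral.integral_const_mul, ← intervalIntegral.integral_const_mul,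
    ← intervalIntegral.integral_add ((hint p).const_mul u) ((hint q).const_mul v)]
  apply intervalIntegral.integral_mono_on zero_le_one (hint _) hint2
  intro t _
  have h := convexOn_exp.2 (Set.mem_univ (a * p * t)) (Set.mem_univ (a * q * t)) hu hv huv
  simp only [smul_eq_mul] at h ⊢
  calc Real.exp (a * (u * p + v * q) * t)
      = Real.exp (u * (a * p * t) + v * (a * q * t)) := by ring_nf
    _ ≤ u * Real.exp (a * p * t) + v * Real.exp (a * q * t) := h

theorem boxCox_convex_concave_in_lambda (x : ℝ) :
    (1 < x → ConvexOn ℝ Set.univ (fun l => boxCox l x)) ∧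
    (0 < x → x < 1 → ConcaveOn ℝ Set.univ (fun l => boxCox l x)) := by
  constructor
  · intro hx
    have hx0 : 0 < x := lt_trans one_pos hx
    have ha : 0 < Real.log x := Real.log_pos hx
    have h := (key_convex (Real.log x)).smul ha.le
    have heq : (fun l => boxCox l x)
        = fun l : ℝ => Real.log x • ∫ t in (0:ℝ)..1, Real.exp (Real.log x * l * t) :=
      funext fun l => by rw [boxCox_eq_integral l x hx0]; simp [smul_eq_mul]
    rw [heq]; exact h
  · intro hx0 hx1
    have ha : Real.log x < 0 := Real.log_neg hx0 hx1
    have h := ((key_convex (Real.log x)).smul (neg_nonneg.2 ha.le)).neg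
    have heq : (fun l => boxCox l x)
        = fun l : ℝ => -((-Real.log x) • ∫ t in (0:ℝ)..1, Real.exp (Real.log x * l * t)) :=
      funext fun l => by rw [boxCox_eq_integral l x hx0]; simp [smul_eq_mul]
    rw [heq]; exact h
end

section
/- Define ψ⁽⁰⁾(λ,x) = ψ(λ,x) and ψ⁽ᵏ⁾ = ∂ψ⁽ᵏ⁻¹⁾/∂λ. Then for all k ≥ 1 and λ ≠ 0, ψ⁽ᵏ⁾(λ,x) = (x^λ (ln x)^k − k ψ⁽ᵏ⁻¹⁾(λ,x))/λ, and ψ⁽ᵏ⁾(0,x) = (ln x)^{k+1}/(k+1). -/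
theorem boxCox_lambda_derivatives (x : ℝ) (hx : 0 < x) :
    ContDiff ℝ (⊤ : ℕ∞) (fun l => boxCox l x) ∧
    (∀ k : ℕ, 1 ≤ k → ∀ l : ℝ, l ≠ 0 →
      iteratedDeriv k (fun l => boxCox l x) l =
        (x ^ l * (Real.log x) ^ k
          - (k : ℝ) * iteratedDeriv (k - 1) (fun l => boxCox l x) l) / l) ∧
    (∀ k : ℕ, 1 ≤ k →
      iteratedDeriv k (fun l => boxCox l x) 0 =
        (Real.log x) ^ (k + 1) / (k + 1)) := by
  set c := Real.log x with hc
  set f : ℝ → ℝ := fun l => boxCox l x with hfdef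
  set g : ℝ → ℝ := fun l => Real.exp (c * l) with hgdef
  have hrpow : ∀ l : ℝ, x ^ l = Real.exp (c * l) := fun l => by
    rw [Real.rpow_def_of_pos hx]
  have hg_deriv : ∀ l : ℝ, HasDerivAt g (c * Real.exp (c * l)) l := by
    intro l
    have h1 : HasDerivAt (fun l : ℝ => c * l) c l := by
      simpa using (hasDerivAt_id l).const_mul c
    rw [hgdef]
    simpa [mul_comm] using h1.exp
  have hg_an : ∀ l : ℝ, AnalyticAt ℝ g l := by
    intro l
    rw [hgdef]
    exact ((analyticAt_const (v := c)).mul analyticAt_id).rexp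
  -- f = dslope g 0
  have hfd : f = dslope g 0 := by
    funext l
    by_cases hl : l = 0
    · subst hl
      simp only [dslope_same]
      rw [(hg_deriv 0).deriv]
      simp [hfdef, boxCox, hc]
    · rw [dslope_of_ne g hl]
      simp only [hfdef, boxCox, if_neg hl, slope_def_field]
      rw [hrpow l]
      simp [hgdef, div_eq_div_iff, sub_zero]
  -- analyticity of f everywhere
  have hf_an : AnalyticOnNhd ℝ f Set.univ := by
    intro l _
    by_cases hl : l = 0
    · subst hl
      obtain ⟨p, hp⟩ := hg_an 0
      rw [hfd]
      exact ⟨p.fslope, hp.has_fpower_series_dslope_fslope⟩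
    · have hga : AnalyticAt ℝ (fun l => (g l - 1) / l) l :=
        (((hg_an l).sub analyticAt_const).div analyticAt_id hl)
      apply hga.congr
      have : ∀ᶠ y in nhds l, y ≠ 0 := eventually_ne_nhds hl
      filter_upwards [this] with y hy
      simp [hfdef, boxCox, if_neg hy, hrpow y, hgdef]
  have hf : ContDiff ℝ (⊤ : ℕ∞) f := hf_an.contDiff
  have hf' : ContDiff ℝ (⊤ : ℕ∞) f := hf.of_le (by simp)
  have hderiv : ∀ (m : ℕ) (l : ℝ),
      HasDerivAt (iteratedDeriv m f) (iteratedDeriv (m + 1) f l) l := by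
    intro m l
    have h1 : DifferentiableAt ℝ (iteratedDeriv m f) l :=
      (hf'.differentiable_iteratedDeriv m (by exact_mod_cast lt_top_iff_ne_top.2 (by simp))).differentiableAt
    rw [iteratedDeriv_succ]
    exact h1.hasDerivAt
  -- basic identity: l * f l = exp (c*l) - 1
  have hA : ∀ l : ℝ, l * f l = Real.exp (c * l) - 1 := by
    intro l
    by_cases hl : l = 0
    · simp [hl]
    · simp only [hfdef, boxCox, if_neg hl]
      rw [hrpow l]
      field_simp
  -- key recurrence
  have hB : ∀ n : ℕ, ∀ l : ℝ,
      l * iteratedDeriv (n + 1) f l + ((n : ℝ) + 1) * iteratedDeriv n f l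
        = c ^ (n + 1) * Real.exp (c * l) := by
    intro n
    induction n with
    | zero =>
      intro l
      have key : (fun l : ℝ => l * f l) = fun l => Real.exp (c * l) - 1 := funext hA
      have h1 : HasDerivAt (fun l : ℝ => l * f l)
          (1 * f l + l * iteratedDeriv 1 f l) l := by
        have h0 : HasDerivAt f (iteratedDeriv 1 f l) l := by
          have := hderiv 0 l
          rwa [iteratedDeriv_zero] at this
        simpa using (hasDerivAt_id l).fun_mul h0
      have h2 : HasDerivAt (fun l : ℝ => Real.exp (c * l) - 1)
          (c * Real.exp (c * l)) l := (hg_deriv l).sub_const 1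
      rw [key] at h1
      have := h1.unique h2
      simp only [iteratedDeriv_zero, one_mul, pow_one, Nat.cast_zero, zero_add]
      linarith [this]
    | succ n ih =>
      intro l
      have key : (fun l : ℝ => l * iteratedDeriv (n + 1) f l + ((n : ℝ) + 1) * iteratedDeriv n f l)
          = fun l => c ^ (n + 1) * Real.exp (c * l) := funext ih
      have h1 : HasDerivAt
          (fun l : ℝ => l * iteratedDeriv (n + 1) f l + ((n : ℝ) + 1) * iteratedDeriv n f l)
          ((1 * iteratedDeriv (n + 1) f l + l * iteratedDeriv (n + 2) f l)
            + ((n : ℝ) + 1) * iteratedDeriv (n + 1) f l) l := by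
        exact ((hasDerivAt_id l).mul (hderiv (n + 1) l)).add
          ((hderiv n l).const_mul ((n : ℝ) + 1))
      have h2 : HasDerivAt (fun l : ℝ => c ^ (n + 1) * Real.exp (c * l))
          (c ^ (n + 1) * (c * Real.exp (c * l))) l := (hg_deriv l).const_mul _
      rw [key] at h1
      have := h1.unique h2
      push_cast
      ring_nf
      ring_nf at this
      linarith [this]
  refine ⟨hf, ?_, ?_⟩
  · intro k hk l hl
    obtain ⟨n, rfl⟩ : ∃ n, k = n + 1 := ⟨k - 1, by omega⟩
    have := hB n l
    rw [hrpow l]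
    have hk1 : n + 1 - 1 = n := by omega
    rw [hk1]
    field_simp
    --
    push_cast
    linarith [this]
  · intro k hk
    have := hB k 0
    simp only [mul_zero, Real.exp_zero, mul_one, zero_mul, zero_add] at this
    have hkpos : (k : ℝ) + 1 ≠ 0 := by positivity
    field_simp
    -- 
    linarith [this]
end

section
/- For each k ≥ 0 and fixed x > 0, lim_{λ→0} ψ⁽ᵏ⁾(λ,x) = (ln x)^{k+1}/(k+1), where ψ⁽ᵏ⁾(λ,x) denotes the k-th λ-derivative of the Box-Cox transform for λ ≠ 0. -/
theorem boxCox_lambda_derivative_limit (x : ℝ) (hx : 0 < x) (k : ℕ) :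
    Filter.Tendsto (fun l : ℝ => iteratedDeriv k (fun l => boxCox l x) l)
      (nhdsWithin 0 {0}ᶜ)
      (nhds ((Real.log x) ^ (k + 1) / (k + 1))) := by
  set c := Real.log x with hc
  set e : ℝ → ℝ := fun l => Real.exp (c * l) with he
  set q : FormalMultilinearSeries ℝ ℝ ℝ :=
    FormalMultilinearSeries.ofScalars ℝ (fun n => c ^ n / (n.factorial : ℝ)) with hqdef
  -- power series of e on the whole line
  have hq : HasFPowerSeriesOnBall e q 0 ⊤ := by
    refine ⟨?_, ENNReal.zero_lt_top, ?_⟩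
    · refine ENNReal.le_of_forall_nnreal_lt fun r _ => ?_
      apply q.le_radius_of_summable
      have : Summable fun n : ℕ => (|c| * r) ^ n / (n.factorial : ℝ) :=
        Real.summable_pow_div_factorial _
      apply this.of_nonneg_of_le (fun n => by positivity) fun n => ?_
      rw [hqdef, FormalMultilinearSeries.ofScalars_norm]
      rw [mul_pow, Real.norm_eq_abs, abs_div, abs_pow, Nat.abs_cast]
      ring_nf
      exact le_refl _
    · intro y _
      have h1 : HasSum (fun n : ℕ => (c * y) ^ n / (n.factorial : ℝ)) (e (0 + y)) := by
        simp only [he, zero_add]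
        rw [Real.exp_eq_exp_ℝ]
        exact NormedSpace.expSeries_div_hasSum_exp (c * y)
      convert h1 using 2 with n
      · rfl
      rw [hqdef, FormalMultilinearSeries.ofScalars_apply_eq]
      rw [mul_pow, smul_eq_mul]
      ring
  have hqa : HasFPowerSeriesAt e q 0 := hq.hasFPowerSeriesAt
  have hd : HasFPowerSeriesAt (dslope e 0) q.fslope 0 :=
    hqa.has_fpower_series_dslope_fslope
  -- boxCox · x equals dslope e 0
  have feq : (fun l => boxCox l x) = dslope e 0 := by
    funext l
    by_cases hl : l = 0
    · subst hl
      have hde : HasDerivAt e c 0 := by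
        have := ((hasDerivAt_id (0 : ℝ)).const_mul c).exp
        simpa using this
      rw [dslope_same, hde.deriv, boxCox, if_pos rfl]
    · rw [dslope_of_ne _ hl, slope_def_field, boxCox, if_neg hl]
      rw [he]
      simp only [mul_zero, Real.exp_zero, sub_zero]
      rw [Real.rpow_def_of_pos hx]
  -- analyticity of dslope e 0 everywhere
  have han : ∀ z : ℝ, AnalyticAt ℝ (dslope e 0) z := by
    intro z
    by_cases hz : z = 0
    · exact hz ▸ hd.analyticAt
    · have h1 : AnalyticAt ℝ (fun w => (Real.exp (c * w) - 1) / w) z := by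
        apply AnalyticAt.div
        · exact (analyticAt_rexp.comp (analyticAt_const.mul analyticAt_id)).sub
            analyticAt_const
        · exact analyticAt_id
        · exact hz
      apply h1.congr
      filter_upwards [eventually_ne_nhds hz] with w hw
      rw [dslope_of_ne _ hw, slope_def_field, he]
      simp [Real.exp_zero]
  have hcd : ContDiff ℝ (k + 1 : ℕ) (dslope e 0) :=
    contDiff_iff_contDiffAt.2 fun z => (han z).contDiffAt
  have hcont : Continuous (iteratedDeriv k (dslope e 0)) :=
    hcd.continuous_iteratedDeriv k (by exact_mod_cast Nat.cast_le.2 k.le_succ)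
  -- value at 0
  have hval : iteratedDeriv k (dslope e 0) 0 = c ^ (k + 1) / (k + 1) := by
    obtain ⟨r, hr⟩ := hd
    have h2 := hr.factorial_smul 1 k
    rw [iteratedDeriv_eq_iteratedFDeriv, ← h2]
    have h3 : q.fslope k (fun _ => (1 : ℝ)) = c ^ (k + 1) / ((k+1).factorial : ℝ) := by
      have := FormalMultilinearSeries.coeff_fslope (p := q) (n := k)
      rw [FormalMultilinearSeries.coeff, FormalMultilinearSeries.coeff] at this
      rw [show (fun _ : Fin k => (1:ℝ)) = 1 from rfl, this, hqdef,
        show (1 : Fin (k+1) → ℝ) = fun _ => (1:ℝ) from rfl,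
        FormalMultilinearSeries.ofScalars_apply_eq]
      simp
    rw [h3, nsmul_eq_mul, Nat.factorial_succ]
    push_cast
    field_simp
  rw [feq]
  have := (hcont.continuousAt (x := 0)).continuousWithinAt (s := {0}ᶜ)
  rw [ContinuousWithinAt, hval] at this
  exact this
end

section
/- The Yeo-Johnson transform ψ_YJ(λ,x) is jointly continuous in (λ,x) on ℝ × ℝ. -/
noncomputable def yeoJohnson (l x : ℝ) : ℝ :=
  if 0 ≤ x then
    (if l = 0 then Real.log (x + 1) else ((x + 1) ^ l - 1) / l)
  else
    (if l = 2 then -Real.log (-x + 1) else ((-x + 1) ^ (2 - l) - 1) / (l - 2))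

noncomputable def hfun (t : ℝ) : ℝ := if t = 0 then 1 else (Real.exp t - 1) / t

lemma hfun_continuous : Continuous hfun := by
  rw [continuous_iff_continuousAt]
  intro t
  rcases eq_or_ne t 0 with rfl | ht
  · rw [← continuousWithinAt_compl_self]
    have h1 : Filter.Tendsto (slope Real.exp 0) (nhdsWithin 0 {(0:ℝ)}ᶜ) (nhds 1) := by
      have := (Real.hasDerivAt_exp 0)
      rw [hasDerivAt_iff_tendsto_slope] at this
      simpa using this
    have h2 : (fun t => hfun t) =ᶠ[nhdsWithin (0:ℝ) {(0:ℝ)}ᶜ] slope Real.exp 0 := by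
      filter_upwards [self_mem_nhdsWithin] with t ht
      have ht' : t ≠ 0 := ht
      simp [hfun, ht', slope, Real.exp_zero, div_eq_inv_mul]
    have : Filter.Tendsto hfun (nhdsWithin 0 {(0:ℝ)}ᶜ) (nhds 1) := h1.congr' h2.symm
    simpa [ContinuousWithinAt, hfun] using this
  · have h2 : (fun t => hfun t) =ᶠ[nhds t] fun t => (Real.exp t - 1) / t := by
      filter_upwards [isOpen_ne.mem_nhds ht] with s hs
      simp [hfun, hs]
    refine ContinuousAt.congr ?_ h2.symm
    exact (Real.continuous_exp.continuousAt.sub continuousAt_const).div continuousAt_id ht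

lemma key (l : ℝ) {y : ℝ} (hy : 0 < y) :
    (if l = 0 then Real.log y else (y ^ l - 1) / l) =
      hfun (l * Real.log y) * Real.log y := by
  rcases eq_or_ne l 0 with rfl | hl
  · simp [hfun]
  · rcases eq_or_ne (Real.log y) 0 with hlog | hlog
    · have hy1 : y = 1 := by
        rcases (Real.log_eq_zero).1 hlog with h | h | h
        · exact absurd h (ne_of_gt hy)
        · exact h
        · linarith
      simp [hy1, hl, hfun]
    · have hne : l * Real.log y ≠ 0 := mul_ne_zero hl hlog
      rw [if_neg hl]
      rw [hfun, if_neg hne, Real.rpow_def_of_pos hy]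
      field_simp

theorem yeoJohnson_continuous :
    Continuous (fun p : ℝ × ℝ => yeoJohnson p.1 p.2) := by
  have heq : (fun p : ℝ × ℝ => yeoJohnson p.1 p.2) =
      fun p : ℝ × ℝ =>
        if 0 ≤ p.2 then hfun (p.1 * Real.log (|p.2| + 1)) * Real.log (|p.2| + 1)
        else -(hfun ((2 - p.1) * Real.log (|p.2| + 1)) * Real.log (|p.2| + 1)) := by
    funext p
    obtain ⟨l, x⟩ := p
    simp only [yeoJohnson]
    by_cases hx : 0 ≤ x
    · rw [if_pos hx, if_pos hx, abs_of_nonneg hx]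
      exact key l (by linarith)
    · rw [if_neg hx, if_neg hx, abs_of_neg (lt_of_not_ge hx)]
      have hy : (0:ℝ) < -x + 1 := by linarith [lt_of_not_ge hx]
      rw [← key (2 - l) hy]
      rcases eq_or_ne l 2 with rfl | hl
      · simp
      · rw [if_neg hl, if_neg (by intro h; apply hl; linarith)]
        have h1 : l - 2 ≠ 0 := by intro h; apply hl; linarith
        have h2 : (2:ℝ) - l ≠ 0 := by intro h; apply hl; linarith
        rw [← neg_div, div_eq_div_iff h1 h2]
        ring
  rw [heq]
  have hlog : Continuous fun p : ℝ × ℝ => Real.log (|p.2| + 1) := by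
    apply Continuous.log
    · exact (continuous_snd.abs.add continuous_const)
    · intro p; positivity
  apply Continuous.if
  · intro p hp
    have hp2 : p.2 = 0 := by
      have h1 : p ∈ closure {p : ℝ × ℝ | 0 ≤ p.2} := frontier_subset_closure hp
      have hcl : IsClosed {p : ℝ × ℝ | 0 ≤ p.2} := isClosed_le continuous_const continuous_snd
      have h1' : 0 ≤ p.2 := hcl.closure_subset h1
      have h2 : p ∉ interior {p : ℝ × ℝ | 0 ≤ p.2} := hp.2
      have h3 : ¬ (0 < p.2) := by
        intro h
        exact h2 (interior_maximal (fun q hq => le_of_lt hq)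
          (isOpen_lt continuous_const continuous_snd) h)
      linarith
    simp [hp2]
  · exact (hfun_continuous.comp (continuous_fst.mul hlog)).mul hlog
  · exact ((hfun_continuous.comp ((continuous_const.sub continuous_fst).mul hlog)).mul hlog).neg
end
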